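/- Fix ε ∈ {0,1}, ν > 0, ζ with 1 + ζν² ≠ 0, and set m = ν²U_XX − εU. Suppose γ(X,T) satisfies γ_X = −(3/(4(1+ζν²)))γ² + m + (ε/3)(ζ + √ν) and −γ_T = (1/(2(1+ζν²)))(−(3/2)U − ζ − √ν)γ² + U_X γ + (Um + (2/3)(ν^{5/2}−1)U_XX − (ε/3)(ζ+√ν)U + (2ε/9)(ζ² + 2√ν ζ + ν)). Then substituting the first equation into the second yields the conservation law γ_T = [ (2/3)(ζν² + 1)U_X − (2/3)(ζ + √ν)γ − γU ]_X. -/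

import Mathlib

noncomputable section

/-- Partial derivative in the first variable. -/
def pdx (f : ℝ → ℝ → ℝ) (x t : ℝ) : ℝ := deriv (fun x' => f x' t) x

/-- Partial derivative in the second variable. -/
def pdt (f : ℝ → ℝ → ℝ) (x t : ℝ) : ℝ := deriv (fun t' => f x t') t

/-- Smoothness of a function of two real variables. -/
def Smooth2 (f : ℝ → ℝ → ℝ) : Prop := ContDiff ℝ (⊤ : ℕ∞) (fun p : ℝ × ℝ => f p.1 p.2)

/-- m = ν² U_XX - ε U -/
def mgen (U : ℝ → ℝ → ℝ) (ε ν : ℝ) : ℝ → ℝ → ℝ := fun a b =>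
  ν ^ 2 * pdx (fun c d => pdx U c d) a b - ε * U a b

lemma Smooth2.diffX {f : ℝ → ℝ → ℝ} (hf : Smooth2 f) (t : ℝ) :
    Differentiable ℝ (fun x => f x t) :=
  (hf.differentiable (by simp)).comp (differentiable_id.prodMk (differentiable_const t))

lemma smooth2_pdx {f : ℝ → ℝ → ℝ} (hf : Smooth2 f) : Smooth2 (pdx f) := by
  have key : ∀ x t : ℝ, pdx f x t
      = fderiv ℝ (fun p : ℝ × ℝ => f p.1 p.2) (x, t) (1, 0) := by
    intro x t
    have hcomp : (fun x' => f x' t)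
        = (fun p : ℝ × ℝ => f p.1 p.2) ∘ (fun x' : ℝ => (x', t)) := rfl
    have hdf : DifferentiableAt ℝ (fun p : ℝ × ℝ => f p.1 p.2) (x, t) :=
      (hf.differentiable (by simp)) _
    have hdg : DifferentiableAt ℝ (fun x' : ℝ => (x', t)) x :=
      (differentiable_id.prodMk (differentiable_const t)) x
    have := fderiv_comp x hdf hdg
    have hderiv : deriv (fun x' => f x' t) x
        = (fderiv ℝ (fun x' => f x' t) x) 1 := fderiv_apply_one_eq_deriv.symm
    rw [pdx, hderiv, hcomp, this]
    have : (fderiv ℝ (fun x' : ℝ => (x', t)) x) 1 = (1, 0) := by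
      have : (fun x' : ℝ => (x', t)) = fun x' : ℝ => (x', (0:ℝ) * x' + t) := by
        funext x'; simp
      rw [this]
      rw [DifferentiableAt.fderiv_prodMk differentiableAt_fun_id
        (by fun_prop : DifferentiableAt ℝ (fun x' : ℝ => (0:ℝ) * x' + t) x)]
      simp
    simp [this]
  have : (fun p : ℝ × ℝ => pdx f p.1 p.2)
      = fun p : ℝ × ℝ => fderiv ℝ (fun q : ℝ × ℝ => f q.1 q.2) p (1, 0) := by
    funext p; exact key p.1 p.2
  rw [Smooth2, this]
  exact (hf.fderiv_right (le_refl _)).clm_apply contDiff_const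

set_option maxHeartbeats 1600000 in
/-- substituting the γ_X equation into the γ_T equation yields the
conservation law γ_T = [(2/3)(ζν²+1)U_X - (2/3)(ζ+√ν)γ - γU]_X. -/
theorem gen_conservation_law (U γ : ℝ → ℝ → ℝ) (hU : Smooth2 U) (hγ : Smooth2 γ)
    (ε ν ζ : ℝ) (hε : ε = 0 ∨ ε = 1) (hν : 0 < ν) (hζ : 1 + ζ * ν ^ 2 ≠ 0)
    (hX : ∀ x t, pdx γ x t
      = -(3 / (4 * (1 + ζ * ν ^ 2))) * (γ x t) ^ 2 + mgen U ε ν x t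
        + ε / 3 * (ζ + Real.sqrt ν))
    (hT : ∀ x t, - pdt γ x t
      = (1 / (2 * (1 + ζ * ν ^ 2)))
          * (-(3 / 2) * U x t - ζ - Real.sqrt ν) * (γ x t) ^ 2
        + pdx U x t * γ x t
        + (U x t * mgen U ε ν x t
            + 2 / 3 * (ν ^ 2 * Real.sqrt ν - 1) * pdx (fun c d => pdx U c d) x t
            - ε / 3 * (ζ + Real.sqrt ν) * U x t
            + 2 * ε / 9 * (ζ ^ 2 + 2 * Real.sqrt ν * ζ + ν))) :
    ∀ x t : ℝ,
      pdt γ x t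
        = pdx (fun a b =>
            2 / 3 * (ζ * ν ^ 2 + 1) * pdx U a b
              - 2 / 3 * (ζ + Real.sqrt ν) * γ a b - γ a b * U a b) x t := by
  intro x t
  have hPU : DifferentiableAt ℝ (fun a => pdx U a t) x := (smooth2_pdx hU).diffX t x
  have hG : DifferentiableAt ℝ (fun a => γ a t) x := hγ.diffX t x
  have hUx : DifferentiableAt ℝ (fun a => U a t) x := hU.diffX t x
  have hrhs : pdx (fun a b =>
            2 / 3 * (ζ * ν ^ 2 + 1) * pdx U a b
              - 2 / 3 * (ζ + Real.sqrt ν) * γ a b - γ a b * U a b) x t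
      = 2 / 3 * (ζ * ν ^ 2 + 1) * pdx (fun c d => pdx U c d) x t
        - 2 / 3 * (ζ + Real.sqrt ν) * pdx γ x t
        - (pdx γ x t * U x t + γ x t * pdx U x t) := by
    rw [pdx]
    rw [deriv_fun_sub (by fun_prop) (hG.fun_mul hUx)]
    rw [deriv_fun_sub (by fun_prop) (by fun_prop)]
    rw [deriv_const_mul _ hPU, deriv_const_mul _ hG, deriv_fun_mul hG hUx]
    rfl
  have hs : Real.sqrt ν ^ 2 = ν := Real.sq_sqrt hν.le
  have hT' := hT x t
  have hX' := hX x t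
  rw [hrhs, hX']
  have hpdt : pdt γ x t = -((1 / (2 * (1 + ζ * ν ^ 2)))
          * (-(3 / 2) * U x t - ζ - Real.sqrt ν) * (γ x t) ^ 2
        + pdx U x t * γ x t
        + (U x t * mgen U ε ν x t
            + 2 / 3 * (ν ^ 2 * Real.sqrt ν - 1) * pdx (fun c d => pdx U c d) x t
            - ε / 3 * (ζ + Real.sqrt ν) * U x t
            + 2 * ε / 9 * (ζ ^ 2 + 2 * Real.sqrt ν * ζ + ν))) := by
    linarith [hT']
  rw [hpdt, mgen]
  set s := Real.sqrt ν with hsdef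
  rw [← hs] at hζ ⊢
  field_simp
  ring
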